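/- If E ⊆ 𝔽_q² and Θ ⊆ 𝔽_q satisfy |E|·|Θ| > q², then there exists θ ∈ Θ with |E·(1,θ)| > q/2. -/

import Mathlib

/-!
Let `N(θ)` count the pairs `(u, v) ∈ E²` with `u·(1,θ) = v·(1,θ)`. Cauchy–Schwarz over the fibres
of `v ↦ v·(1,θ)` gives `|E|² ≤ |E·(1,θ)| N(θ) ≤ q N(θ)`. Two distinct points are identified by at
most one direction, so `∑_θ N(θ) ≤ q|E| + |E|²`. As every excess `q N(θ) - |E|²` is nonnegative,
the excesses over `Θ` sum to at most `q²|E|`, so some `θ ∈ Θ` has `|Θ| q N(θ) ≤ |Θ||E|² + q²|E|`,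
and then `|E·(1,θ)| ≥ |E|²/N(θ) ≥ q|E||Θ| / (|E||Θ| + q²) > q/2` because `q² < |E||Θ|`.
-/

open Finset

namespace Finset

variable {α β : Type*} [DecidableEq β]

def collisions (g : α → β) (s : Finset α) : Finset (α × α) :=
  {p ∈ s ×ˢ s | g p.1 = g p.2}

theorem card_collisions_eq_sum_sq (g : α → β) (s : Finset α) :
    #(s.collisions g) = ∑ t ∈ s.image g, #{x ∈ s | g x = t} ^ 2 := by
  rw [card_eq_sum_card_fiberwise (f := fun p => g p.1) (t := s.image g)]
  · refine sum_congr rfl fun t _ => ?_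
    rw [sq, ← card_product]
    congr 1
    ext ⟨x, y⟩
    simp only [collisions, mem_filter, mem_product]
    constructor
    · rintro ⟨⟨⟨hx, hy⟩, hxy⟩, rfl⟩
      exact ⟨⟨hx, rfl⟩, hy, hxy.symm⟩
    · rintro ⟨⟨hx, rfl⟩, hy, hyx⟩
      exact ⟨⟨⟨hx, hy⟩, hyx.symm⟩, rfl⟩
  · intro p hp
    exact mem_image_of_mem g (mem_product.1 (mem_filter.1 hp).1).1

theorem sq_card_le_card_image_mul_card_collisions (g : α → β) (s : Finset α) :
    #s ^ 2 ≤ #(s.image g) * #(s.collisions g) := by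
  rw [card_collisions_eq_sum_sq, card_eq_sum_card_image g s]
  exact sq_sum_le_card_mul_sum_sq

end Finset

section Directions

variable {F : Type*} [Field F] [DecidableEq F]

def dirProj (θ : F) (v : F × F) : F := v.1 + θ * v.2

theorem card_filter_dirProj_eq_le_one_of_ne [Fintype F] {u v : F × F} (huv : u ≠ v) :
    #{θ | dirProj θ u = dirProj θ v} ≤ 1 := by
  refine card_le_one.2 fun θ hθ θ' hθ' => ?_
  replace hθ : u.1 + θ * u.2 = v.1 + θ * v.2 := (mem_filter.1 hθ).2
  replace hθ' : u.1 + θ' * u.2 = v.1 + θ' * v.2 := (mem_filter.1 hθ').2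
  by_cases h2 : u.2 = v.2
  · exact absurd (Prod.ext (by rwa [h2, add_left_inj] at hθ) h2) huv
  · have : (θ - θ') * (u.2 - v.2) = 0 := by linear_combination hθ - hθ'
    exact sub_eq_zero.1 ((mul_eq_zero.1 this).resolve_right (sub_ne_zero.2 h2))

theorem sum_card_collisions_dirProj_le [Fintype F] (E : Finset (F × F)) :
    ∑ θ, #(E.collisions (dirProj θ)) ≤ #E * Fintype.card F + #E ^ 2 := by
  have hswap : ∑ θ, #(E.collisions (dirProj θ)) =
      ∑ p ∈ E ×ˢ E, #{θ | dirProj θ p.1 = dirProj θ p.2} := by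
    simp only [collisions, card_eq_sum_ones, sum_filter]
    exact sum_comm
  rw [hswap, ← diag_union_offDiag, sum_union (disjoint_diag_offDiag E)]
  have hdiag : ∑ p ∈ E.diag, #{θ | dirProj θ p.1 = dirProj θ p.2} ≤ #E * Fintype.card F := by
    calc _ ≤ #E.diag • Fintype.card F := sum_le_card_nsmul _ _ _ fun p _ => card_le_univ _
      _ = _ := by rw [diag_card, smul_eq_mul]
  have hoff : ∑ p ∈ E.offDiag, #{θ | dirProj θ p.1 = dirProj θ p.2} ≤ #E ^ 2 :=
    calc _ ≤ #E.offDiag * 1 := by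
          simpa using sum_le_card_nsmul E.offDiag _ 1 fun p hp =>
            card_filter_dirProj_eq_le_one_of_ne (mem_offDiag.1 hp).2.2
      _ ≤ #E ^ 2 := by rw [offDiag_card, mul_one, sq]; exact Nat.sub_le _ _
  exact add_le_add hdiag hoff

theorem sq_card_le_card_mul_card_collisions_dirProj [Fintype F] (E : Finset (F × F)) (θ : F) :
    #E ^ 2 ≤ Fintype.card F * #(E.collisions (dirProj θ)) :=
  (sq_card_le_card_image_mul_card_collisions _ E).trans
    (Nat.mul_le_mul_right _ (card_le_univ _))

theorem card_mul_sum_card_collisions_dirProj_le [Fintype F] (E : Finset (F × F)) (Θ : Finset F) :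
    Fintype.card F * ∑ θ ∈ Θ, #(E.collisions (dirProj θ)) ≤
      #Θ * #E ^ 2 + #E * Fintype.card F ^ 2 := by
  set N := fun θ => #(E.collisions (dirProj θ))
  have hrest : #(univ \ Θ) * #E ^ 2 ≤ Fintype.card F * ∑ θ ∈ univ \ Θ, N θ := by
    rw [mul_sum]
    simpa using card_nsmul_le_sum _ _ _ fun θ _ => sq_card_le_card_mul_card_collisions_dirProj E θ
  have htotal := Nat.mul_le_mul_left (Fintype.card F) (sum_card_collisions_dirProj_le E)
  rw [← sum_sdiff (subset_univ Θ), mul_add] at htotal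
  have hcard : #(univ \ Θ) + #Θ = Fintype.card F := card_sdiff_add_card_eq_card (subset_univ Θ)
  nlinarith

end Directions

theorem lt_two_mul_of_sq_le_mul {a b q m N : ℕ} (hCS : a ^ 2 ≤ m * N)
    (hN : b * (q * N) ≤ b * a ^ 2 + a * q ^ 2) (h : q ^ 2 < a * b) : q < 2 * m := by
  have ha : 0 < a := Nat.pos_of_ne_zero (by rintro rfl; simp at h)
  have hb : 0 < b := Nat.pos_of_ne_zero (by rintro rfl; simp at h)
  have : a * (q * b) ≤ m * (a * b + q ^ 2) := by
    refine Nat.le_of_mul_le_mul_left ?_ ha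
    calc a * (a * (q * b)) = a ^ 2 * (q * b) := by ring
      _ ≤ m * N * (q * b) := Nat.mul_le_mul_right _ hCS
      _ = m * (b * (q * N)) := by ring
      _ ≤ m * (b * a ^ 2 + a * q ^ 2) := Nat.mul_le_mul_left _ hN
      _ = a * (m * (a * b + q ^ 2)) := by ring
  have : q * (a * b) < 2 * m * (a * b) := by nlinarith
  exact Nat.lt_of_mul_lt_mul_right this

theorem good_direction_large
    {F : Type*} [Field F] [Fintype F] [DecidableEq F] (q : ℕ) (hq : Fintype.card F = q)
    (E : Finset (F × F)) (Θ : Finset F) (h : E.card * Θ.card > q ^ 2) :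
    ∃ θ ∈ Θ, ((E.image (fun v : F × F => v.1 + θ * v.2)).card : ℝ) > (q : ℝ) / 2 := by
  subst hq
  have hΘ : Θ.Nonempty := nonempty_iff_ne_empty.2 (by rintro rfl; simp at h)
  obtain ⟨θ, hθ, hN⟩ := exists_le_of_sum_le hΘ
    (f := fun θ => #Θ * (Fintype.card F * #(E.collisions (dirProj θ))))
    (g := fun _ => #Θ * #E ^ 2 + #E * Fintype.card F ^ 2) <| by
      rw [← mul_sum, ← mul_sum, sum_const, smul_eq_mul]
      exact Nat.mul_le_mul_left _ (card_mul_sum_card_collisions_dirProj_le E Θ)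
  refine ⟨θ, hθ, ?_⟩
  have := lt_two_mul_of_sq_le_mul (sq_card_le_card_image_mul_card_collisions (dirProj θ) E) hN h
  rw [gt_iff_lt, div_lt_iff₀ two_pos]
  exact_mod_cast (by omega : Fintype.card F < #(E.image (dirProj θ)) * 2)
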